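/- arXiv:0809.0393 — 6 statements merged into one kernel-verified Lean document; each statement's English description precedes it below -/
import Mathlib

section
/- Let K be a compact topological space and let Φ : C(K) → ℝ be a positive linear functional. For bounded f : K → [0,∞), define Φ̄(f) := sup { Φ g : g ∈ C(K), 0 ≤ g ≤ f }. Let (fₙ) be a sequence of functions fₙ : K → [0,∞) such that f₁ ≤ α for some finite constant α, and such that for every x ∈ K the sequence fₙ(x) decreases monotonically to 0. Then Φ̄(fₙ) → 0 as n → ∞. -/
open Filter Topology

/-!
Choose continuous minorants `0 ≤ gₙ ≤ fₙ` with `Φ gₙ ≥ Φ̄ fₙ - δₙ`, where `∑ δₙ ≤ ε`.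
Their running infima `hₙ = g₀ ⊓ ⋯ ⊓ gₙ` still satisfy `Φ hₙ ≥ Φ̄ fₙ - ε`, because
`Φ (a ⊓ b) + Φ (a ⊔ b) = Φ a + Φ b` and `hₙ ⊔ gₙ₊₁` is a minorant of `fₙ`. The `hₙ` decrease
to `0` pointwise, hence uniformly by Dini's theorem, and a positive functional is bounded by
`‖h‖ Φ 1`; so `Φ hₙ → 0` and `Φ̄ fₙ ≤ 2ε` eventually.
-/

/-- For a positive linear functional `Φ` on `C(K)` and a bounded nonnegative function
`f : K → ℝ`, the extension `Φ̄(f)` is the supremum of `Φ g` over continuous `g` with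
`0 ≤ g ≤ f`. -/
noncomputable def PhiBar {K : Type*} [TopologicalSpace K] [CompactSpace K]
    (Φ : C(K, ℝ) →ₗ[ℝ] ℝ) (f : K → ℝ) : ℝ :=
  sSup {r : ℝ | ∃ g : C(K, ℝ), (∀ x, 0 ≤ g x) ∧ (∀ x, g x ≤ f x) ∧ Φ g = r}

def runningInf {α : Type*} [SemilatticeInf α] (g : ℕ → α) : ℕ → α
  | 0 => g 0
  | n + 1 => runningInf g n ⊓ g (n + 1)

section runningInf
variable {α : Type*} [SemilatticeInf α] (g : ℕ → α)

lemma runningInf_succ (n : ℕ) : runningInf g (n + 1) = runningInf g n ⊓ g (n + 1) := rfl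

lemma runningInf_le : ∀ n, runningInf g n ≤ g n
  | 0 => le_rfl
  | _ + 1 => inf_le_right

lemma le_runningInf {a : α} (ha : ∀ n, a ≤ g n) : ∀ n, a ≤ runningInf g n
  | 0 => ha 0
  | n + 1 => le_inf (le_runningInf ha n) (ha (n + 1))

lemma antitone_runningInf : Antitone (runningInf g) :=
  antitone_nat_of_succ_le fun _ => inf_le_left

end runningInf

section
variable {K : Type*} [TopologicalSpace K] [CompactSpace K] {Φ : C(K, ℝ) →ₗ[ℝ] ℝ}

lemma LinearMap.continuous_of_monotone (hΦ : Monotone Φ) : Continuous Φ := by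
  refine AddMonoidHomClass.continuous_of_bound Φ (Φ 1) fun h => abs_le.2 ⟨?_, ?_⟩
  · have : -‖h‖ • (1 : C(K, ℝ)) ≤ h := fun x => by
      simpa using neg_abs_le (h x) |>.trans' (neg_le_neg (h.norm_coe_le_norm x))
    simpa [mul_comm] using hΦ this
  · have : h ≤ ‖h‖ • (1 : C(K, ℝ)) := fun x => by
      simpa using (le_abs_self (h x)).trans (h.norm_coe_le_norm x)
    simpa [mul_comm] using hΦ this

lemma le_phiBar (hΦ : Monotone Φ) {f : K → ℝ} {α : ℝ} (hfα : ∀ x, f x ≤ α) {g : C(K, ℝ)}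
    (hg0 : 0 ≤ g) (hgf : ⇑g ≤ f) : Φ g ≤ PhiBar Φ f := by
  refine le_csSup ⟨α * Φ 1, ?_⟩ ⟨g, hg0, hgf, rfl⟩
  rintro _ ⟨g', -, hg'f, rfl⟩
  simpa using hΦ (show g' ≤ α • (1 : C(K, ℝ)) from fun x => by simpa using (hg'f x).trans (hfα x))

lemma phiBar_nonneg (hΦ : Monotone Φ) {f : K → ℝ} {α : ℝ} (hfα : ∀ x, f x ≤ α) (hf0 : 0 ≤ f) :
    0 ≤ PhiBar Φ f := by
  simpa using le_phiBar hΦ hfα le_rfl (show ⇑(0 : C(K, ℝ)) ≤ f from hf0)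

lemma exists_lt_apply_of_lt_phiBar {f : K → ℝ} (hf0 : 0 ≤ f) {r : ℝ} (hr : r < PhiBar Φ f) :
    ∃ g : C(K, ℝ), 0 ≤ g ∧ ⇑g ≤ f ∧ r < Φ g := by
  obtain ⟨_, ⟨g, hg0, hgf, rfl⟩, hrg⟩ :=
    exists_lt_of_lt_csSup (by exact ⟨0, 0, fun _ => le_rfl, hf0, map_zero Φ⟩) hr
  exact ⟨g, hg0, hgf, hrg⟩

lemma phiBar_sub_sum_le_apply_runningInf (hΦ : Monotone Φ) {f : ℕ → K → ℝ} {α : ℝ}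
    (hf : Antitone f) (hfα : ∀ x, f 0 x ≤ α) {g : ℕ → C(K, ℝ)}
    (hg0 : ∀ n, 0 ≤ g n) (hgf : ∀ n, ⇑(g n) ≤ f n) {δ : ℕ → ℝ}
    (hgδ : ∀ n, PhiBar Φ (f n) - δ n ≤ Φ (g n)) :
    ∀ n, PhiBar Φ (f n) - ∑ k ∈ Finset.range (n + 1), δ k ≤ Φ (runningInf g n)
  | 0 => by simpa [runningInf] using hgδ 0
  | n + 1 => by
    have hinf_sup := congrArg Φ (inf_add_sup (runningInf g n) (g (n + 1)))
    have hsup : Φ (runningInf g n ⊔ g (n + 1)) ≤ PhiBar Φ (f n) :=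
      le_phiBar hΦ (fun x => (hf n.zero_le x).trans (hfα x))
        (le_sup_of_le_right (hg0 _)) fun x =>
          max_le (runningInf_le g n x |>.trans (hgf n x)) ((hgf (n + 1) x).trans (hf n.le_succ x))
    have := phiBar_sub_sum_le_apply_runningInf hΦ hf hfα hg0 hgf hgδ n
    rw [map_add, map_add] at hinf_sup
    rw [runningInf_succ, Finset.sum_range_succ]
    linarith [hgδ (n + 1)]

lemma tendsto_apply_runningInf_zero (hΦ : Monotone Φ) {f : ℕ → K → ℝ}
    (hf : ∀ x, Tendsto (f · x) atTop (𝓝 0)) {g : ℕ → C(K, ℝ)} (hg0 : ∀ n, 0 ≤ g n)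
    (hgf : ∀ n, ⇑(g n) ≤ f n) : Tendsto (fun n => Φ (runningInf g n)) atTop (𝓝 0) := by
  have hdini : Tendsto (runningInf g) atTop (𝓝 0) :=
    ContinuousMap.tendsto_of_antitone_of_pointwise (antitone_runningInf g) fun x =>
      tendsto_of_tendsto_of_tendsto_of_le_of_le tendsto_const_nhds (hf x)
        (fun n => le_runningInf g hg0 n x) fun n => runningInf_le g n x |>.trans (hgf n x)
  exact ((LinearMap.continuous_of_monotone hΦ).tendsto' 0 0 (map_zero Φ)).comp hdini

end

theorem stmt_1 {K : Type*} [TopologicalSpace K] [CompactSpace K]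
    (Φ : C(K, ℝ) →ₗ[ℝ] ℝ)
    (hΦpos : ∀ g : C(K, ℝ), (∀ x, 0 ≤ g x) → 0 ≤ Φ g)
    (f : ℕ → K → ℝ) (α : ℝ)
    (hf0 : ∀ n x, 0 ≤ f n x)
    (hα : ∀ x, f 0 x ≤ α)
    (hmono : ∀ n x, f (n + 1) x ≤ f n x)
    (hlim : ∀ x, Tendsto (fun n => f n x) atTop (𝓝 0)) :
    Tendsto (fun n => PhiBar Φ (f n)) atTop (𝓝 0) := by
  have hΦ : Monotone Φ := (monotone_iff_map_nonneg Φ).2 hΦpos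
  have hf : Antitone f := antitone_nat_of_succ_le hmono
  refine tendsto_order.2 ⟨fun a ha => .of_forall fun n =>
    ha.trans_le (phiBar_nonneg hΦ (fun x => (hf n.zero_le x).trans (hα x)) (hf0 n)), fun ε hε => ?_⟩
  set δ : ℕ → ℝ := fun k => ε / 4 * (1 / 2) ^ k
  have hδ : ∀ n, ∑ k ∈ Finset.range n, δ k ≤ ε / 2 := fun n => by
    rw [← Finset.mul_sum]
    nlinarith [sum_geometric_two_le n]
  choose g hg0 hgf hgδ using fun n =>
    exists_lt_apply_of_lt_phiBar (Φ := Φ) (hf0 n)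
      (sub_lt_self (PhiBar Φ (f n)) (by positivity : 0 < δ n))
  have hΦg := tendsto_apply_runningInf_zero hΦ hlim hg0 hgf
  filter_upwards [hΦg.eventually (gt_mem_nhds (half_pos hε))] with n hn
  have := phiBar_sub_sum_le_apply_runningInf hΦ hf hα hg0 hgf (fun n => (hgδ n).le) n
  linarith [hδ (n + 1)]
end

section
/- Let K be a compact topological space and let Φ : C(K) → ℝ be a positive linear functional. Let (gₙ) be a sequence in C(K) with 0 ≤ gₙ ≤ α for every n, for some finite constant α, such that gₙ(x) → 0 for every x ∈ K. Then Φ gₙ → 0 as n → ∞. -/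
open Filter Topology MeasureTheory
open scoped CompactlySupported

/-! Continuous real functions on `K` are exactly those on its largest Hausdorff quotient, so we may
assume `K` is Hausdorff. Then the Riesz–Markov–Kakutani theorem represents `Φ` as integration
against a finite measure, and the claim is dominated convergence with the constant bound `α`. -/

lemma ContinuousMap.exists_isFiniteMeasure_integral_eq {X : Type*} [TopologicalSpace X]
    [T2Space X] [CompactSpace X] [MeasurableSpace X] [BorelSpace X] (Φ : C(X, ℝ) →ₗ[ℝ] ℝ)
    (hΦpos : ∀ f : C(X, ℝ), (∀ x, 0 ≤ f x) → 0 ≤ Φ f) :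
    ∃ μ : Measure X, IsFiniteMeasure μ ∧ ∀ f : C(X, ℝ), ∫ x, f x ∂μ = Φ f := by
  let Λ : C_c(X, ℝ) →ₚ[ℝ] ℝ := PositiveLinearMap.mk₀
    { toFun f := Φ f
      map_add' f g := map_add Φ f.toContinuousMap g.toContinuousMap
      map_smul' c f := map_smul Φ c f.toContinuousMap }
    (fun f hf => hΦpos f hf)
  exact ⟨RealRMK.rieszMeasure Λ, inferInstance, fun f =>
    RealRMK.integral_rieszMeasure Λ (CompactlySupportedContinuousMap.continuousMapEquiv f)⟩

theorem LinearMap.tendsto_apply_of_bdd_of_tendsto_zero {K : Type*} [TopologicalSpace K]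
    [T2Space K] [CompactSpace K]
    (Φ : C(K, ℝ) →ₗ[ℝ] ℝ) (hΦpos : ∀ f : C(K, ℝ), (∀ x, 0 ≤ f x) → 0 ≤ Φ f)
    (g : ℕ → C(K, ℝ)) (α : ℝ) (hg0 : ∀ n x, 0 ≤ g n x) (hgα : ∀ n x, g n x ≤ α)
    (hlim : ∀ x, Tendsto (fun n => g n x) atTop (𝓝 0)) :
    Tendsto (fun n => Φ (g n)) atTop (𝓝 0) := by
  borelize K
  obtain ⟨μ, _, hμ⟩ := ContinuousMap.exists_isFiniteMeasure_integral_eq Φ hΦpos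
  simp_rw [← hμ]
  simpa using tendsto_integral_of_dominated_convergence (fun _ => α)
    (fun n => (g n).continuous.aestronglyMeasurable) (integrable_const α)
    (fun n => .of_forall fun x => by simpa [abs_of_nonneg (hg0 n x)] using hgα n x)
    (.of_forall hlim)

instance T2Quotient.compactSpace {X : Type*} [TopologicalSpace X] [CompactSpace X] :
    CompactSpace (T2Quotient X) :=
  Quotient.compactSpace

def ContinuousMap.liftT2Quotient {X Y : Type*} [TopologicalSpace X] [TopologicalSpace Y]
    [T2Space Y] (f : C(X, Y)) : C(T2Quotient X, Y) :=
  ⟨T2Quotient.lift f.continuous, T2Quotient.continuous_lift f.continuous⟩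

@[simp]
lemma ContinuousMap.liftT2Quotient_mk {X Y : Type*} [TopologicalSpace X] [TopologicalSpace Y]
    [T2Space Y] (f : C(X, Y)) (x : X) : f.liftT2Quotient (T2Quotient.mk x) = f x :=
  T2Quotient.lift_mk f.continuous x

theorem stmt_2 {K : Type*} [TopologicalSpace K] [CompactSpace K]
    (Φ : C(K, ℝ) →ₗ[ℝ] ℝ)
    (hΦpos : ∀ g : C(K, ℝ), (∀ x, 0 ≤ g x) → 0 ≤ Φ g)
    (g : ℕ → C(K, ℝ)) (α : ℝ)
    (hg0 : ∀ n x, 0 ≤ g n x)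
    (hgα : ∀ n x, g n x ≤ α)
    (hlim : ∀ x, Tendsto (fun n => g n x) atTop (𝓝 0)) :
    Tendsto (fun n => Φ (g n)) atTop (𝓝 0) := by
  let q : C(K, T2Quotient K) := ⟨T2Quotient.mk, T2Quotient.continuous_mk K⟩
  have hq : ∀ f : C(K, ℝ), f.liftT2Quotient.comp q = f := fun f => by ext; simp [q]
  have hquot := LinearMap.tendsto_apply_of_bdd_of_tendsto_zero
    (Φ ∘ₗ (ContinuousMap.compRightAlgHom ℝ ℝ q).toLinearMap) (fun f hf => hΦpos _ fun x => hf (q x))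
    (fun n => (g n).liftT2Quotient) α
    (fun n y => T2Quotient.inductionOn y fun x => by simpa using hg0 n x)
    (fun n y => T2Quotient.inductionOn y fun x => by simpa using hgα n x)
    (fun y => T2Quotient.inductionOn y fun x => by simpa using hlim x)
  simpa [hq] using hquot
end

section
/- Let K be a compact topological space and let (fₙ) be a sequence in C(K) with 0 ≤ fₙ ≤ α for every n, for some finite constant α, such that fₙ(x) → 0 for every x ∈ K. Then for every ε > 0 there exists a convex combination g of the functions f₁, f₂, … (i.e., g = Σᵢ λᵢ f_{nᵢ} for finitely many indices nᵢ and nonnegative coefficients λᵢ summing to 1) such that g(x) ≤ ε for all x ∈ K. -/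
/-!
A positive functional `Λ` on `C(K, ℝ)` satisfies `Λ (f n) → 0` whenever `f n → 0` pointwise with a
uniform bound: every real continuous function on `K` factors through the Hausdorff quotient of `K`,
where `Λ` is integration against a finite measure (Riesz–Markov–Kakutani), and dominated
convergence applies. If no convex combination of the `f n` were `≤ ε`, Hahn–Banach would separate
their convex hull from the open convex set `ball 0 ε - {p | 0 ≤ p}`; the separating functional is
positive and `≥ 1` on every `f n`, a contradiction.
-/

open Filter Topology Pointwise MeasureTheory CompactlySupported

theorem PositiveLinearMap.exists_finiteMeasure_integral_eq {X : Type*} [TopologicalSpace X]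
    [T2Space X] [CompactSpace X] [MeasurableSpace X] [BorelSpace X]
    (Λ : C(X, ℝ) →ₚ[ℝ] ℝ) :
    ∃ μ : Measure X, IsFiniteMeasure μ ∧ ∀ g : C(X, ℝ), Λ g = ∫ x, g x ∂μ := by
  let Λc : C_c(X, ℝ) →ₚ[ℝ] ℝ :=
    { toFun g := Λ g
      map_add' g g' := map_add Λ (g : C(X, ℝ)) g'
      map_smul' c g := map_smul Λ c (g : C(X, ℝ))
      monotone' g g' hgg' := Λ.monotone' hgg' }
  exact ⟨RealRMK.rieszMeasure Λc, inferInstance, fun g =>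
    (RealRMK.integral_rieszMeasure Λc (CompactlySupportedContinuousMap.continuousMapEquiv g)).symm⟩

theorem PositiveLinearMap.tendsto_zero_of_abs_le_of_tendsto_zero_of_t2Space {X : Type*}
    [TopologicalSpace X] [T2Space X] [CompactSpace X] (Λ : C(X, ℝ) →ₚ[ℝ] ℝ) (f : ℕ → C(X, ℝ))
    (C : ℝ) (hC : ∀ n x, |f n x| ≤ C) (hlim : ∀ x, Tendsto (fun n => f n x) atTop (𝓝 0)) :
    Tendsto (fun n => Λ (f n)) atTop (𝓝 0) := by
  borelize X
  obtain ⟨μ, hμ, hΛ⟩ := Λ.exists_finiteMeasure_integral_eq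
  simp_rw [hΛ]
  simpa using tendsto_integral_of_dominated_convergence (fun _ => C)
    (fun n => (f n).continuous.aestronglyMeasurable) (integrable_const C)
    (fun n => ae_of_all _ (hC n)) (ae_of_all _ hlim)

theorem PositiveLinearMap.tendsto_zero_of_abs_le_of_tendsto_zero {K : Type*} [TopologicalSpace K]
    [CompactSpace K] (Λ : C(K, ℝ) →ₚ[ℝ] ℝ) (f : ℕ → C(K, ℝ)) (C : ℝ)
    (hC : ∀ n x, |f n x| ≤ C) (hlim : ∀ x, Tendsto (fun n => f n x) atTop (𝓝 0)) :
    Tendsto (fun n => Λ (f n)) atTop (𝓝 0) := by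
  have : CompactSpace (T2Quotient K) := Quotient.compactSpace
  let π : C(K, T2Quotient K) := ⟨T2Quotient.mk, T2Quotient.continuous_mk K⟩
  let pullback : C(T2Quotient K, ℝ) →ₚ[ℝ] C(K, ℝ) :=
    PositiveLinearMap.mk₀ (ContinuousMap.compRightAlgHom ℝ ℝ π).toLinearMap
      fun g hg => ContinuousMap.le_def.2 fun x => hg _
  let f' n : C(T2Quotient K, ℝ) := ⟨_, T2Quotient.continuous_lift (f n).continuous⟩
  have hf' n : pullback (f' n) = f n := by ext x; rfl
  simp_rw [← hf']
  refine (Λ.comp pullback).tendsto_zero_of_abs_le_of_tendsto_zero_of_t2Space f' C ?_ ?_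
  · intro n q
    induction q using T2Quotient.inductionOn
    exact hC _ _
  · intro q
    induction q using T2Quotient.inductionOn
    exact hlim _

theorem ContinuousMap.exists_positiveLinearMap_one_le_of_forall_exists_lt {K : Type*}
    [TopologicalSpace K] [CompactSpace K] {s : Set C(K, ℝ)} (hs : Convex ℝ s) {ε : ℝ} (hε : 0 < ε)
    (h : ∀ g ∈ s, ∃ x, ε < g x) : ∃ Λ : C(K, ℝ) →ₚ[ℝ] ℝ, ∀ g ∈ s, 1 ≤ Λ g := by
  set U : Set C(K, ℝ) := Metric.ball 0 ε - Set.Ici 0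
  have hU_disj : Disjoint U s := by
    rw [Set.disjoint_left]
    rintro _ ⟨b, hb, p, hp, rfl⟩ hbp
    obtain ⟨x, hx⟩ := h _ hbp
    have hbx : |b x| < ε := (ContinuousMap.norm_lt_iff _ hε).1 (mem_ball_zero_iff.1 hb) x
    have hpx : 0 ≤ p x := hp x
    simp only [ContinuousMap.sub_apply] at hx
    linarith [le_abs_self (b x)]
  have hU_sub (p : C(K, ℝ)) (hp : 0 ≤ p) : -p ∈ U :=
    ⟨0, Metric.mem_ball_self hε, p, hp, zero_sub p⟩
  obtain ⟨φ, u, hφU, hφs⟩ := geometric_hahn_banach_open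
    ((convex_ball 0 ε).sub (convex_Ici 0)) Metric.isOpen_ball.sub_right hs hU_disj
  have hu : 0 < u := by simpa using hφU _ (hU_sub 0 le_rfl)
  have hφ_nonneg (p : C(K, ℝ)) (hp : 0 ≤ p) : 0 ≤ φ p := by
    by_contra! hφp
    have ht : 0 ≤ u / -φ p := div_nonneg hu.le (neg_nonneg.2 hφp.le)
    have := hφU _ (hU_sub ((u / -φ p) • p) (smul_nonneg ht hp))
    rw [map_neg, map_smul, smul_eq_mul, ← mul_neg, div_mul_cancel₀ _ (neg_ne_zero.2 hφp.ne)]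
      at this
    exact this.false
  refine ⟨PositiveLinearMap.mk₀ (u⁻¹ • φ.toLinearMap) fun p hp => ?_, fun g hg => ?_⟩
  · exact mul_nonneg (inv_nonneg.2 hu.le) (hφ_nonneg p hp)
  · show 1 ≤ u⁻¹ * φ g
    rw [le_inv_mul_iff₀ hu, mul_one]
    exact hφs g hg

theorem stmt_4 {K : Type*} [TopologicalSpace K] [CompactSpace K]
    (f : ℕ → C(K, ℝ)) (α : ℝ)
    (hf0 : ∀ n x, 0 ≤ f n x)
    (hfα : ∀ n x, f n x ≤ α)
    (hlim : ∀ x, Tendsto (fun n => f n x) atTop (𝓝 0))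
    (ε : ℝ) (hε : 0 < ε) :
    ∃ g ∈ convexHull ℝ (Set.range f), ∀ x, g x ≤ ε := by
  by_contra! h
  obtain ⟨Λ, hΛ⟩ := ContinuousMap.exists_positiveLinearMap_one_le_of_forall_exists_lt
    (convex_convexHull ℝ _) hε h
  have hbound n x : |f n x| ≤ α := abs_le.2 ⟨by linarith [hf0 n x, hfα n x], hfα n x⟩
  obtain ⟨n, hn⟩ :=
    ((Λ.tendsto_zero_of_abs_le_of_tendsto_zero f α hbound hlim).eventually_lt_const one_pos).exists
  exact (hΛ _ (subset_convexHull ℝ _ ⟨n, rfl⟩)).not_gt hn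
end

section
/- Let K be a compact topological space and let Φ be an arbitrary continuous linear functional on C(K) (not assumed positive). Let (gₙ) be a sequence in C(K) with |gₙ(x)| ≤ α for all x ∈ K and all n, for some finite constant α, such that gₙ(x) → 0 for every x ∈ K. Then Φ gₙ → 0 as n → ∞. -/
/-!
A continuous functional `Φ` on `C(K)` is order bounded, so it is the difference of two positive
functionals: `Φ⁺ u = sup Φ([0, u])` for `u ≥ 0` is additive because of the Riesz decomposition
`[0, u + v] = [0, u] + [0, v]`, and `Φ⁺ - Φ` is positive as well. By Riesz–Markov–Kakutani each
positive functional is integration against a finite measure, and dominated convergence applies.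
Riesz–Markov–Kakutani needs `K` to be Hausdorff; in general every real continuous function on `K`
factors through the Hausdorff quotient `T2Quotient K`, which is compact.
-/

open Filter Topology Set MeasureTheory
open scoped NNReal CompactlySupported Pointwise

theorem Set.Icc_zero_add_Icc_zero {E : Type*} [AddCommGroup E] [Lattice E] [IsOrderedAddMonoid E]
    {u v : E} (hu : 0 ≤ u) (hv : 0 ≤ v) :
    Icc 0 u + Icc 0 v = Icc 0 (u + v) := by
  refine Subset.antisymm ?_ fun h ⟨h0, huv⟩ => ?_
  · rintro _ ⟨a, ⟨ha0, hau⟩, b, ⟨hb0, hbv⟩, rfl⟩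
    exact ⟨add_nonneg ha0 hb0, add_le_add hau hbv⟩
  · refine ⟨h ⊓ u, ⟨le_inf h0 hu, inf_le_right⟩, h - h ⊓ u,
      ⟨sub_nonneg.2 inf_le_left, ?_⟩, add_sub_cancel _ _⟩
    rw [sub_inf, sub_self]
    exact sup_le hv (sub_le_iff_le_add'.2 huv)

namespace CompactlySupportedContinuousMap

variable {X : Type*} [TopologicalSpace X]

instance : PosSMulMono ℝ C_c(X, ℝ) := .lift (⇑) Iff.rfl fun _ _ => rfl

instance : PosSMulReflectLE ℝ C_c(X, ℝ) := .lift (⇑) Iff.rfl fun _ _ => rfl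

end CompactlySupportedContinuousMap

namespace LinearMap

section OrderBounded

variable {E : Type*} [AddCommGroup E] [Lattice E] [Module ℝ E]
  (Λ : E →ₗ[ℝ] ℝ) (hΛ : ∀ u, BddAbove (Λ '' Icc 0 u))

include hΛ in
lemma sSup_image_Icc_zero_nonneg {u : E} (hu : 0 ≤ u) : 0 ≤ sSup (Λ '' Icc 0 u) :=
  le_csSup_of_le (hΛ u) (mem_image_of_mem Λ ⟨le_rfl, hu⟩) (map_zero Λ).ge

include hΛ in
lemma sSup_image_Icc_zero_add [IsOrderedAddMonoid E] {u v : E} (hu : 0 ≤ u) (hv : 0 ≤ v) :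
    sSup (Λ '' Icc 0 (u + v)) = sSup (Λ '' Icc 0 u) + sSup (Λ '' Icc 0 v) := by
  rw [← Icc_zero_add_Icc_zero hu hv, image_add,
    csSup_add ((nonempty_Icc.2 hu).image _) (hΛ u) ((nonempty_Icc.2 hv).image _) (hΛ v)]

lemma sSup_image_Icc_zero_smul [PosSMulMono ℝ E] [PosSMulReflectLE ℝ E] (u : E) {c : ℝ}
    (hc : 0 ≤ c) : sSup (Λ '' Icc 0 (c • u)) = c * sSup (Λ '' Icc 0 u) := by
  rcases hc.eq_or_lt with rfl | hc
  · simp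
  have hIcc : c • Icc 0 u = Icc 0 (c • u) := by
    simpa [image_smul] using (OrderIso.smulRight hc).image_Icc 0 u
  rw [← hIcc, image_smul_set, Real.sSup_smul_of_nonneg hc.le, smul_eq_mul]

end OrderBounded

section CompactlySupported

open CompactlySupportedContinuousMap

variable {X : Type*} [TopologicalSpace X]
  (Λ : C_c(X, ℝ) →ₗ[ℝ] ℝ) (hΛ : ∀ u, BddAbove (Λ '' Icc 0 u))

noncomputable def posPartNNReal : C_c(X, ℝ≥0) →ₗ[ℝ≥0] ℝ≥0 where
  toFun f := ⟨sSup (Λ '' Icc 0 f.toReal), Λ.sSup_image_Icc_zero_nonneg hΛ toReal_nonneg⟩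
  map_add' f g := by
    ext
    simp only [toReal_add]
    exact Λ.sSup_image_Icc_zero_add hΛ toReal_nonneg toReal_nonneg
  map_smul' c f := by
    ext
    simp only [toReal_smul, NNReal.smul_def, RingHom.id_apply]
    exact Λ.sSup_image_Icc_zero_smul _ c.2

noncomputable def posPart : C_c(X, ℝ) →ₚ[ℝ] ℝ := toRealPositiveLinear (Λ.posPartNNReal hΛ)

lemma le_posPart {u : C_c(X, ℝ)} (hu : 0 ≤ u) : Λ u ≤ Λ.posPart hΛ u := by
  have hu' : (nnrealPart u).toReal = u := by
    ext x
    simpa using hu x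
  rw [posPart, toRealPositiveLinear_apply, nnrealPart_neg_eq_zero_of_nonneg hu, map_zero,
    NNReal.coe_zero, sub_zero]
  change Λ u ≤ sSup (Λ '' Icc 0 (nnrealPart u).toReal)
  rw [hu']
  exact le_csSup (hΛ u) (mem_image_of_mem Λ ⟨hu, le_rfl⟩)

include hΛ in
theorem exists_positiveLinearMap_sub_eq :
    ∃ Λ₁ Λ₂ : C_c(X, ℝ) →ₚ[ℝ] ℝ, ∀ u, Λ u = Λ₁ u - Λ₂ u :=
  ⟨Λ.posPart hΛ, .mk₀ ((Λ.posPart hΛ).toLinearMap - Λ) fun _ hu =>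
    sub_nonneg.2 (Λ.le_posPart hΛ hu), fun _ => (sub_sub_cancel _ _).symm⟩

end CompactlySupported

end LinearMap

theorem PositiveLinearMap.tendsto_of_dominated {X : Type*} [TopologicalSpace X] [T2Space X]
    [LocallyCompactSpace X]
    (Λ : C_c(X, ℝ) →ₚ[ℝ] ℝ) {g : ℕ → C_c(X, ℝ)} {f : C_c(X, ℝ)} (G : C_c(X, ℝ))
    (hgG : ∀ n x, |g n x| ≤ G x) (hgf : ∀ x, Tendsto (fun n => g n x) atTop (𝓝 (f x))) :
    Tendsto (fun n => Λ (g n)) atTop (𝓝 (Λ f)) := by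
  borelize X
  simp_rw [← RealRMK.integral_rieszMeasure Λ]
  exact tendsto_integral_of_dominated_convergence G
    (fun n => (g n).continuous.aestronglyMeasurable) G.integrable
    (fun n => ae_of_all _ (hgG n)) (ae_of_all _ hgf)

namespace ContinuousLinearMap

variable {K : Type*} [TopologicalSpace K] [CompactSpace K]

lemma bddAbove_image_Icc_zero (Φ : C(K, ℝ) →L[ℝ] ℝ) (u : C(K, ℝ)) :
    BddAbove (Φ '' Icc 0 u) := by
  refine ⟨‖Φ‖ * ‖u‖, ?_⟩
  rintro _ ⟨h, ⟨h0, hu⟩, rfl⟩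
  refine (le_abs_self _).trans (Φ.le_opNorm_of_le ?_)
  refine (ContinuousMap.norm_le h (norm_nonneg u)).2 fun x => ?_
  rw [Real.norm_of_nonneg (show 0 ≤ h x from h0 x)]
  exact (hu x).trans ((le_abs_self _).trans (u.norm_coe_le_norm x))

theorem tendsto_apply_of_tendsto_pointwise_of_t2Space [T2Space K] (Φ : C(K, ℝ) →L[ℝ] ℝ)
    {g : ℕ → C(K, ℝ)} {f : C(K, ℝ)} (α : ℝ) (hgα : ∀ n x, |g n x| ≤ α)
    (hgf : ∀ x, Tendsto (fun n => g n x) atTop (𝓝 (f x))) :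
    Tendsto (fun n => Φ (g n)) atTop (𝓝 (Φ f)) := by
  let e := CompactlySupportedContinuousMap.continuousMapEquiv (α := K) (β := ℝ)
  let Λ : C_c(K, ℝ) →ₗ[ℝ] ℝ := (Φ : C(K, ℝ) →ₗ[ℝ] ℝ).comp
    ({ toFun := e.symm
       map_add' _ _ := rfl
       map_smul' _ _ := rfl } : C_c(K, ℝ) →ₗ[ℝ] C(K, ℝ))
  obtain ⟨Λ₁, Λ₂, hΛ⟩ := Λ.exists_positiveLinearMap_sub_eq
    fun u => (Φ.bddAbove_image_Icc_zero u).mono <| by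
      rintro _ ⟨h, hh, rfl⟩
      exact ⟨h, hh, rfl⟩
  have hΦ : ∀ v, Φ v = Λ₁ (e v) - Λ₂ (e v) := fun v => hΛ (e v)
  have hgG : ∀ n x, |e (g n) x| ≤ e (.const K α) x := hgα
  have hgf' : ∀ x, Tendsto (fun n => e (g n) x) atTop (𝓝 (e f x)) := hgf
  simp_rw [hΦ]
  exact (Λ₁.tendsto_of_dominated _ hgG hgf').sub (Λ₂.tendsto_of_dominated _ hgG hgf')

end ContinuousLinearMap

theorem stmt_6 {K : Type*} [TopologicalSpace K] [CompactSpace K]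
    (Φ : C(K, ℝ) →L[ℝ] ℝ)
    (g : ℕ → C(K, ℝ)) (α : ℝ)
    (hgα : ∀ n x, |g n x| ≤ α)
    (hlim : ∀ x, Tendsto (fun n => g n x) atTop (𝓝 0)) :
    Tendsto (fun n => Φ (g n)) atTop (𝓝 0) := by
  have : CompactSpace (T2Quotient K) := Quotient.compactSpace
  let π : C(K, T2Quotient K) := ⟨T2Quotient.mk, T2Quotient.continuous_mk K⟩
  let g' n : C(T2Quotient K, ℝ) := ⟨T2Quotient.lift (g n).continuous, T2Quotient.continuous_lift _⟩
  have hg' : ∀ n, (g' n).comp π = g n :=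
    fun n => ContinuousMap.ext fun x => T2Quotient.lift_mk (g n).continuous x
  have hg'α : ∀ n y, |g' n y| ≤ α := fun n => (T2Quotient.surjective_mk K).forall.2 (hgα n)
  have hg'lim : ∀ y, Tendsto (fun n => g' n y) atTop (𝓝 0) :=
    (T2Quotient.surjective_mk K).forall.2 hlim
  simpa [hg'] using
    (Φ.comp (ContinuousMap.compCLM ℝ ℝ π)).tendsto_apply_of_tendsto_pointwise_of_t2Space
      (f := 0) α hg'α hg'lim
end

section
/- Let K be a compact topological space and let (gₙ) be a sequence in C(K) with |gₙ(x)| ≤ α for all x ∈ K and all n, for some finite constant α, such that gₙ(x) → 0 for every x ∈ K. Then gₙ → 0 weakly in the Banach space C(K), i.e., Φ gₙ → 0 for every continuous linear functional Φ on C(K). -/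
/-!
Let `|Φ|` be the modulus of `Φ` in the order dual, `|Φ| f = sup {Φ h : |h| ≤ f}` for `f ≥ 0`. It
is additive and monotone on nonnegative functions and `|Φ h| ≤ |Φ| |h|`, so it suffices to show
`|Φ| |gₙ| → 0`. By Dini's theorem `|Φ| fₙ → 0` whenever `fₙ ↓ 0` pointwise, i.e. `|Φ|` is a Daniell
integral, and the dominated convergence theorem holds for Daniell integrals: the numbers
`Vₙ = sup_m |Φ| (max_{n ≤ k ≤ n + m} uₖ)` decrease, and a diagonal choice of almost maximizing
finite maxima produces `fₙ ↓ 0` with `|Φ| fₙ ≥ Vₙ - ε`, forcing `Vₙ → 0`.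
-/

open Filter Topology

section DaniellFunctional

variable {X : Type*} [TopologicalSpace X]

/-- Only the values of `μ` on nonnegative functions matter. -/
structure IsDaniellFunctional (μ : C(X, ℝ) → ℝ) : Prop where
  mono : ∀ ⦃f g : C(X, ℝ)⦄, 0 ≤ f → f ≤ g → μ f ≤ μ g
  add : ∀ ⦃f g : C(X, ℝ)⦄, 0 ≤ f → 0 ≤ g → μ (f + g) = μ f + μ g
  tendsto_zero : ∀ f : ℕ → C(X, ℝ), Antitone f → (∀ n, 0 ≤ f n) →
    (∀ x, Tendsto (f · x) atTop (𝓝 0)) → Tendsto (μ ∘ f) atTop (𝓝 0)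

/-- The Daniell extension of `μ` evaluated at the lower semicontinuous function
`sup_{k ≥ n} u k`. -/
noncomputable def tailSupIntegral (μ : C(X, ℝ) → ℝ) (u : ℕ → C(X, ℝ)) (n : ℕ) : ℝ :=
  ⨆ m, μ (partialSups (fun k => u (n + k)) m)

lemma partialSups_shift_succ_le {α : Type*} [SemilatticeSup α] (u : ℕ → α) (n m : ℕ) :
    partialSups (fun k => u (n + 1 + k)) m ≤ partialSups (fun k => u (n + k)) (m + 1) :=
  partialSups_le _ _ _ fun k hk => by
    simpa only [Nat.add_right_comm n 1 k, add_assoc] using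
      le_partialSups_of_le (fun k => u (n + k)) (Nat.succ_le_succ hk)

lemma le_partialSups_shift {α : Type*} [SemilatticeSup α] (u : ℕ → α) (n m : ℕ) :
    u n ≤ partialSups (fun k => u (n + k)) m := by
  simpa using le_partialSups_of_le (fun k => u (n + k)) (Nat.zero_le m)

lemma tendsto_partialSups_shift_apply {u : ℕ → C(X, ℝ)} (hu₀ : ∀ n, 0 ≤ u n) {x : X}
    (hux : Tendsto (u · x) atTop (𝓝 0)) (m : ℕ → ℕ) :
    Tendsto (fun N => partialSups (fun k => u (N + k)) (m N) x) atTop (𝓝 0) := by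
  have hsup_lt (a : ℝ) {f g : C(X, ℝ)} : (f ⊔ g) x < a ↔ f x < a ∧ g x < a := by
    rw [ContinuousMap.sup_apply, sup_lt_iff]
  refine tendsto_order.2 ⟨fun a ha => Eventually.of_forall fun N => ?_, fun a ha => ?_⟩
  · exact ha.trans_le ((hu₀ N).trans (le_partialSups_shift u N (m N)) x)
  · obtain ⟨N₀, hN₀⟩ := eventually_atTop.1 (hux.eventually_lt_const ha)
    filter_upwards [eventually_ge_atTop N₀] with N hN
    exact (partialSups_iff_forall (fun f : C(X, ℝ) => f x < a) (hsup_lt a)).2 fun k _ =>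
      hN₀ _ (by omega)

lemma exists_abs_le_abs_sub_le {f g h : C(X, ℝ)} (hf : 0 ≤ f) (hg : 0 ≤ g)
    (hh : |h| ≤ f + g) : ∃ h₁, |h₁| ≤ f ∧ |h - h₁| ≤ g := by
  refine ⟨(h ⊓ f) ⊔ -f, ?_⟩
  simp only [ContinuousMap.le_def, ContinuousMap.abs_apply, ContinuousMap.sub_apply,
    ContinuousMap.sup_apply, ContinuousMap.inf_apply, ContinuousMap.neg_apply,
    ContinuousMap.add_apply, ContinuousMap.zero_apply, ← forall_and] at hf hg hh ⊢
  intro x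
  have := hf x
  have := hg x
  have := abs_le.1 (hh x)
  simp only [abs_le, min_def, max_def]
  split_ifs <;> constructor <;> constructor <;> linarith

namespace IsDaniellFunctional

variable {μ : C(X, ℝ) → ℝ}

lemma map_zero (hμ : IsDaniellFunctional μ) : μ 0 = 0 := by
  simpa using hμ.add le_rfl le_rfl

lemma nonneg (hμ : IsDaniellFunctional μ) {f : C(X, ℝ)} (hf : 0 ≤ f) : 0 ≤ μ f :=
  hμ.map_zero ▸ hμ.mono le_rfl hf

lemma map_inf_add_map_sup (hμ : IsDaniellFunctional μ) {f g : C(X, ℝ)} (hf : 0 ≤ f)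
    (hg : 0 ≤ g) : μ (f ⊓ g) + μ (f ⊔ g) = μ f + μ g := by
  rw [← hμ.add (le_inf hf hg) (le_sup_of_le_left hf), inf_add_sup, hμ.add hf hg]

variable {u : ℕ → C(X, ℝ)} {c : C(X, ℝ)}

lemma map_partialSups_le_tailSupIntegral (hμ : IsDaniellFunctional μ)
    (hu₀ : ∀ n, 0 ≤ u n) (huc : ∀ n, u n ≤ c) (n m : ℕ) :
    μ (partialSups (fun k => u (n + k)) m) ≤ tailSupIntegral μ u n := by
  refine le_ciSup (f := fun m => μ (partialSups (fun k => u (n + k)) m)) ⟨μ c, ?_⟩ m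
  rintro _ ⟨m, rfl⟩
  exact hμ.mono ((hu₀ _).trans (le_partialSups_shift u _ m))
    (partialSups_le _ _ _ fun k _ => huc _)

lemma map_le_tailSupIntegral (hμ : IsDaniellFunctional μ)
    (hu₀ : ∀ n, 0 ≤ u n) (huc : ∀ n, u n ≤ c) (n : ℕ) : μ (u n) ≤ tailSupIntegral μ u n := by
  simpa using hμ.map_partialSups_le_tailSupIntegral hu₀ huc n 0

lemma tailSupIntegral_antitone (hμ : IsDaniellFunctional μ)
    (hu₀ : ∀ n, 0 ≤ u n) (huc : ∀ n, u n ≤ c) : Antitone (tailSupIntegral μ u) :=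
  antitone_nat_of_succ_le fun n => ciSup_le fun m =>
    (hμ.mono ((hu₀ _).trans (le_partialSups_shift u _ m)) (partialSups_shift_succ_le u n m)).trans
      (hμ.map_partialSups_le_tailSupIntegral hu₀ huc n (m + 1))

/-- The diagonal argument: `f N` is the minimum of the first `N + 1` finite maxima `w n`, each
chosen within `ε / 2 ^ (n + 1)` of `tailSupIntegral μ u n`. -/
lemma exists_antitone_tendsto_zero_sub_le (hμ : IsDaniellFunctional μ)
    (hu₀ : ∀ n, 0 ≤ u n) (huc : ∀ n, u n ≤ c) (hlim : ∀ x, Tendsto (u · x) atTop (𝓝 0))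
    {ε : ℝ} (hε : 0 < ε) :
    ∃ f : ℕ → C(X, ℝ), Antitone f ∧ (∀ N, 0 ≤ f N) ∧ (∀ x, Tendsto (f · x) atTop (𝓝 0)) ∧
      ∀ N, tailSupIntegral μ u N - ε ≤ μ (f N) := by
  set V := tailSupIntegral μ u
  set T : ℕ → ℕ → C(X, ℝ) := fun n m => partialSups (fun k => u (n + k)) m
  have hT₀ (n m : ℕ) : 0 ≤ T n m := (hu₀ n).trans (le_partialSups_shift u n m)
  have hTV (n m : ℕ) : μ (T n m) ≤ V n := hμ.map_partialSups_le_tailSupIntegral hu₀ huc n m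
  choose m hm using fun n => exists_lt_of_lt_ciSup
    (sub_lt_self (V n) (by positivity : 0 < ε / 2 ^ (n + 1)))
  set w := fun n => T n (m n)
  set f := fun N => (Finset.range (N + 1)).inf' Finset.nonempty_range_add_one w
  have hf₀ (N : ℕ) : 0 ≤ f N := Finset.le_inf' _ _ fun n _ => hT₀ n _
  have hfw (N : ℕ) : f N ≤ w N := Finset.inf'_le _ (Finset.self_mem_range_succ N)
  have hf_succ (N : ℕ) : f (N + 1) = w (N + 1) ⊓ f N := by
    simp_rw [f, Finset.range_add_one (n := N + 1)]
    exact Finset.inf'_insert _ _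
  have hlow (N : ℕ) : V N - ε + ε / 2 ^ (N + 1) ≤ μ (f N) := by
    induction N with
    | zero =>
      have hf_zero : f 0 = w 0 := by simp [f]
      rw [hf_zero]
      linarith [hm 0]
    | succ N ih =>
      have hsup : μ (w (N + 1) ⊔ f N) ≤ V N := by
        refine (hμ.mono (le_sup_of_le_right (hf₀ N)) (sup_le ?_ ?_)).trans
          (hTV N (max (m (N + 1) + 1) (m N)))
        · exact (partialSups_shift_succ_le u N _).trans ((partialSups _).mono (le_max_left _ _))
        · exact (hfw N).trans ((partialSups _).mono (le_max_right _ _))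
      have hmeet := hμ.map_inf_add_map_sup (hT₀ (N + 1) (m (N + 1))) (hf₀ N)
      have hV := hμ.tailSupIntegral_antitone hu₀ huc (Nat.le_succ N)
      have hε2 : ε / 2 ^ (N + 1) = 2 * (ε / 2 ^ (N + 1 + 1)) := by ring
      rw [hf_succ]
      linarith [hm (N + 1)]
  refine ⟨f, antitone_nat_of_succ_le fun N => hf_succ N ▸ inf_le_right, hf₀, fun x => ?_,
    fun N => (lt_add_of_pos_right _ (by positivity)).le.trans (hlow N)⟩
  exact squeeze_zero (fun N => hf₀ N x) (fun N => hfw N x)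
    (tendsto_partialSups_shift_apply hu₀ (hlim x) m)

lemma tendsto_tailSupIntegral (hμ : IsDaniellFunctional μ)
    (hu₀ : ∀ n, 0 ≤ u n) (huc : ∀ n, u n ≤ c) (hlim : ∀ x, Tendsto (u · x) atTop (𝓝 0)) :
    Tendsto (tailSupIntegral μ u) atTop (𝓝 0) := by
  have hV₀ (n : ℕ) : 0 ≤ tailSupIntegral μ u n :=
    (hμ.nonneg (hu₀ n)).trans (hμ.map_le_tailSupIntegral hu₀ huc n)
  refine tendsto_order.2 ⟨fun a ha => Eventually.of_forall fun n => ha.trans_le (hV₀ n),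
    fun a ha => ?_⟩
  obtain ⟨f, hf_anti, hf₀, hf_lim, hf_low⟩ :=
    hμ.exists_antitone_tendsto_zero_sub_le hu₀ huc hlim (half_pos ha)
  obtain ⟨N, hN⟩ := ((hμ.tendsto_zero f hf_anti hf₀ hf_lim).eventually_lt_const
    (half_pos ha)).exists
  filter_upwards [eventually_ge_atTop N] with n hn
  linarith [hμ.tailSupIntegral_antitone hu₀ huc hn, hf_low N, show μ (f N) < a / 2 from hN]

lemma tendsto_map_zero (hμ : IsDaniellFunctional μ)
    (hu₀ : ∀ n, 0 ≤ u n) (huc : ∀ n, u n ≤ c) (hlim : ∀ x, Tendsto (u · x) atTop (𝓝 0)) :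
    Tendsto (μ ∘ u) atTop (𝓝 0) :=
  squeeze_zero (fun n => hμ.nonneg (hu₀ n)) (hμ.map_le_tailSupIntegral hu₀ huc)
    (hμ.tendsto_tailSupIntegral hu₀ huc hlim)

end IsDaniellFunctional

end DaniellFunctional

section TotalVariation

variable {K : Type*} [TopologicalSpace K] (Φ : C(K, ℝ) →L[ℝ] ℝ)

noncomputable def totalVariation (f : C(K, ℝ)) : ℝ :=
  sSup ((fun h => Φ h) '' {h | |h| ≤ f})

variable {Φ}

lemma totalVariation_le {f : C(K, ℝ)} (hf : 0 ≤ f) {r : ℝ} (H : ∀ h, |h| ≤ f → Φ h ≤ r) :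
    totalVariation Φ f ≤ r :=
  csSup_le ⟨Φ 0, 0, by simpa using hf, rfl⟩ (by rintro _ ⟨h, hh, rfl⟩; exact H h hh)

variable [CompactSpace K]

lemma norm_le_norm_of_abs_le {f h : C(K, ℝ)} (hh : |h| ≤ f) : ‖h‖ ≤ ‖f‖ :=
  (ContinuousMap.norm_le _ (norm_nonneg f)).2 fun x =>
    (ContinuousMap.le_def.1 hh x).trans ((le_abs_self _).trans (f.norm_coe_le_norm x))

lemma apply_le_opNorm_mul_of_abs_le {f h : C(K, ℝ)} (hh : |h| ≤ f) : Φ h ≤ ‖Φ‖ * ‖f‖ :=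
  (Real.le_norm_self _).trans ((Φ.le_opNorm h).trans (by gcongr; exact norm_le_norm_of_abs_le hh))

lemma apply_le_totalVariation {f h : C(K, ℝ)} (hh : |h| ≤ f) : Φ h ≤ totalVariation Φ f :=
  le_csSup ⟨‖Φ‖ * ‖f‖, by rintro _ ⟨h, hh, rfl⟩; exact apply_le_opNorm_mul_of_abs_le hh⟩
    ⟨h, hh, rfl⟩

lemma abs_apply_le_totalVariation (h : C(K, ℝ)) : |Φ h| ≤ totalVariation Φ |h| :=
  abs_le'.2 ⟨apply_le_totalVariation le_rfl, by
    simpa using apply_le_totalVariation (Φ := Φ) (abs_neg h).le⟩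

lemma totalVariation_nonneg {f : C(K, ℝ)} (hf : 0 ≤ f) : 0 ≤ totalVariation Φ f := by
  simpa using apply_le_totalVariation (Φ := Φ) (h := 0) (by simpa using hf)

lemma totalVariation_le_opNorm_mul {f : C(K, ℝ)} (hf : 0 ≤ f) :
    totalVariation Φ f ≤ ‖Φ‖ * ‖f‖ :=
  totalVariation_le hf fun _ => apply_le_opNorm_mul_of_abs_le

lemma totalVariation_mono {f g : C(K, ℝ)} (hf : 0 ≤ f) (hfg : f ≤ g) :
    totalVariation Φ f ≤ totalVariation Φ g :=
  totalVariation_le hf fun _ hh => apply_le_totalVariation (hh.trans hfg)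

lemma totalVariation_add {f g : C(K, ℝ)} (hf : 0 ≤ f) (hg : 0 ≤ g) :
    totalVariation Φ (f + g) = totalVariation Φ f + totalVariation Φ g := by
  refine le_antisymm (totalVariation_le (add_nonneg hf hg) fun h hh => ?_) ?_
  · obtain ⟨h₁, hh₁, hh₂⟩ := exists_abs_le_abs_sub_le hf hg hh
    calc Φ h = Φ h₁ + Φ (h - h₁) := by rw [← map_add, add_sub_cancel]
      _ ≤ totalVariation Φ f + totalVariation Φ g :=
        add_le_add (apply_le_totalVariation hh₁) (apply_le_totalVariation hh₂)
  · have hpair (h₁ h₂ : C(K, ℝ)) (hh₁ : |h₁| ≤ f) (hh₂ : |h₂| ≤ g) :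
        Φ h₁ ≤ totalVariation Φ (f + g) - Φ h₂ := by
      have := apply_le_totalVariation (Φ := Φ) ((abs_add_le h₁ h₂).trans (add_le_add hh₁ hh₂))
      rw [map_add] at this
      linarith
    have hg' : totalVariation Φ g ≤ totalVariation Φ (f + g) - totalVariation Φ f :=
      totalVariation_le hg fun h₂ hh₂ => le_sub_comm.1 <|
        totalVariation_le hf fun h₁ hh₁ => hpair h₁ h₂ hh₁ hh₂
    linarith

/-- By Dini's theorem, pointwise decreasing convergence to `0` is norm convergence. -/
lemma isDaniellFunctional_totalVariation : IsDaniellFunctional (totalVariation Φ) where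
  mono _ _ := totalVariation_mono
  add _ _ := totalVariation_add
  tendsto_zero f hf_anti hf₀ hf_lim := by
    have hnorm : Tendsto (‖f ·‖) atTop (𝓝 0) := by
      simpa using (ContinuousMap.tendsto_of_antitone_of_pointwise (f := 0) hf_anti hf_lim).norm
    exact squeeze_zero (fun n => totalVariation_nonneg (hf₀ n))
      (fun n => totalVariation_le_opNorm_mul (hf₀ n)) (by simpa using hnorm.const_mul ‖Φ‖)

end TotalVariation

theorem stmt_7 {K : Type*} [TopologicalSpace K] [CompactSpace K]
    (g : ℕ → C(K, ℝ)) (α : ℝ)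
    (hgα : ∀ n x, |g n x| ≤ α)
    (hlim : ∀ x, Tendsto (fun n => g n x) atTop (𝓝 0)) :
    ∀ Φ : C(K, ℝ) →L[ℝ] ℝ, Tendsto (fun n => Φ (g n)) atTop (𝓝 0) := by
  intro Φ
  have hdom : Tendsto (fun n => totalVariation Φ |g n|) atTop (𝓝 0) :=
    isDaniellFunctional_totalVariation.tendsto_map_zero (c := ContinuousMap.const K α)
      (fun n => abs_nonneg (g n)) (fun n => ContinuousMap.le_def.2 fun x => by simpa using hgα n x)
      (fun x => by simpa using (hlim x).abs)
  exact squeeze_zero_norm (fun n => abs_apply_le_totalVariation (g n)) hdom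
end

section
/- Let X be a real Banach space and let K ⊆ X be a separable weakly compact subset. Then the closed convex hull of K (the closure in norm of the convex hull of K) is weakly compact. -/
/-!
A positive functional `φ` of norm at most one on `C(S, ℝ)`, where `S` is the weakly compact set
`K`, is integration against a finite regular measure (Riesz–Markov–Kakutani). Since `K` is
norm-bounded (uniform boundedness) and norm-separable, the inclusion of `S` into `X` is Bochner
integrable against that measure (Pettis), and its integral `x` satisfies `f x = φ (f ∘ ι)` for all
`f ∈ X*`. The map `φ ↦ x` is weak*-to-weak continuous on the weak*-compact convex set of such
functionals (Banach–Alaoglu), so its image is a weakly compact convex set containing `K` (Dirac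
functionals), hence containing the weak closure of `co K`, which is its norm closure.
-/

open Set MeasureTheory Metric TopologicalSpace CompactlySupported

section WeaklyContinuous

variable {X : Type*} [NormedAddCommGroup X] [NormedSpace ℝ X]

theorem Convex.isClosed_toWeakSpace_image {s : Set X} (hs : Convex ℝ s) (hc : IsClosed s) :
    IsClosed (toWeakSpace ℝ X '' s) := by
  rw [← closure_eq_iff_isClosed, ← hs.toWeakSpace_closure ℝ, hc.closure_eq]

variable {S : Type*} [TopologicalSpace S] {ι : S → X}

theorem Continuous.dual_comp_of_toWeakSpace_comp (hι : Continuous (toWeakSpace ℝ X ∘ ι))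
    (f : StrongDual ℝ X) : Continuous (f ∘ ι) :=
  (WeakBilin.eval_continuous (topDualPairing ℝ X).flip f).comp hι

theorem exists_norm_le_of_continuous_toWeakSpace_comp [CompactSpace S]
    (hι : Continuous (toWeakSpace ℝ X ∘ ι)) : ∃ C, ∀ s, ‖ι s‖ ≤ C := by
  obtain ⟨C, hC⟩ := banach_steinhaus (g := fun s => NormedSpace.inclusionInDoubleDual ℝ X (ι s))
    fun f => (isCompact_range (hι.dual_comp_of_toWeakSpace_comp f)).isBounded.exists_norm_le.imp
      fun _ h s => h _ (mem_range_self s)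
  exact ⟨C, fun s => (NormedSpace.inclusionInDoubleDualLi ℝ).norm_map (ι s) ▸ hC s⟩

theorem isClosed_preimage_closedBall_of_continuous_toWeakSpace_comp
    (hι : Continuous (toWeakSpace ℝ X ∘ ι)) (y : X) (r : ℝ) :
    IsClosed (ι ⁻¹' closedBall y r) := by
  have h := ((convex_closedBall y r).isClosed_toWeakSpace_image isClosed_closedBall).preimage hι
  rwa [preimage_comp, (toWeakSpace ℝ X).injective.preimage_image] at h

theorem stronglyMeasurable_of_continuous_toWeakSpace_comp [MeasurableSpace S]
    [OpensMeasurableSpace S] (hι : Continuous (toWeakSpace ℝ X ∘ ι))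
    (hsep : IsSeparable (range ι)) : StronglyMeasurable ι := by
  borelize X
  refine stronglyMeasurable_iff_measurable_separable.2 ⟨measurable_of_isOpen fun U hU => ?_, hsep⟩
  obtain ⟨D, -, hDc, hD⟩ := hsep.exists_countable_dense_subset
  have hU_eq : ι ⁻¹' U = ⋃ d ∈ D, ⋃ (q : ℚ) (_ : closedBall d q ⊆ U), ι ⁻¹' closedBall d q := by
    refine Subset.antisymm (fun s hs => ?_) (iUnion₂_subset fun d _ =>
      iUnion₂_subset fun q hq => preimage_mono hq)
    obtain ⟨ε, hε, hball⟩ := Metric.isOpen_iff.1 hU _ hs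
    obtain ⟨d, hdD, hd⟩ := Metric.mem_closure_iff.1 (hD (mem_range_self s)) (ε / 3) (by positivity)
    obtain ⟨q, hq₁, hq₂⟩ := exists_rat_btwn (show ε / 3 < 2 * ε / 3 by linarith)
    have hsub : closedBall d q ⊆ U := fun z hz => hball <| by
      rw [mem_closedBall] at hz
      rw [mem_ball]
      linarith [dist_triangle z d (ι s), dist_comm (ι s) d]
    simp only [mem_iUnion, mem_preimage, mem_closedBall]
    exact ⟨d, hdD, q, hsub, by linarith⟩
  rw [hU_eq]
  exact .biUnion hDc fun d _ => .iUnion fun q => .iUnion fun _ =>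
    (isClosed_preimage_closedBall_of_continuous_toWeakSpace_comp hι d q).measurableSet

def IsBarycenter (ι : S → X) (φ : C(S, ℝ) → ℝ) (x : X) : Prop :=
  ∀ (f : StrongDual ℝ X) (g : C(S, ℝ)), ⇑g = f ∘ ι → f x = φ g

theorem isBarycenter_eval (ι : S → X) (s : S) : IsBarycenter ι (fun g => g s) (ι s) :=
  fun _ _ hg => (congrFun hg s).symm

theorem IsBarycenter.add_smul {φ ψ : C(S, ℝ) → ℝ} {x y : X} (hx : IsBarycenter ι φ x)
    (hy : IsBarycenter ι ψ y) (a b : ℝ) : IsBarycenter ι (a • φ + b • ψ) (a • x + b • y) :=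
  fun f g hg => by simp [hx f g hg, hy f g hg]

theorem IsBarycenter.eq (hι : Continuous (toWeakSpace ℝ X ∘ ι)) {φ : C(S, ℝ) → ℝ} {x y : X}
    (hx : IsBarycenter ι φ x) (hy : IsBarycenter ι φ y) : x = y := by
  refine sub_eq_zero.1 (SeparatingDual.eq_zero_of_forall_dual_eq_zero (R := ℝ) fun f => ?_)
  let g : C(S, ℝ) := ⟨f ∘ ι, hι.dual_comp_of_toWeakSpace_comp f⟩
  rw [map_sub, hx f g rfl, hy f g rfl, sub_self]

theorem exists_isBarycenter [CompleteSpace X] [CompactSpace S] [T2Space S]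
    (hι : Continuous (toWeakSpace ℝ X ∘ ι)) (hsep : IsSeparable (range ι))
    (φ : StrongDual ℝ C(S, ℝ)) (hφ : ∀ g, 0 ≤ g → 0 ≤ φ g) : ∃ x, IsBarycenter ι φ x := by
  borelize S
  let Λ : C_c(S, ℝ) →ₚ[ℝ] ℝ := PositiveLinearMap.mk₀
    { toFun := fun g => φ ⟨g, g.continuous⟩
      map_add' := fun g h => by rw [← map_add]; rfl
      map_smul' := fun c g => by rw [RingHom.id_apply, ← map_smul]; rfl }
    fun g hg => hφ _ hg
  obtain ⟨C, hC⟩ := exists_norm_le_of_continuous_toWeakSpace_comp hι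
  have hint : Integrable ι (RealRMK.rieszMeasure Λ) :=
    .of_bound (stronglyMeasurable_of_continuous_toWeakSpace_comp hι hsep).aestronglyMeasurable C
      (ae_of_all _ hC)
  refine ⟨∫ s, ι s ∂(RealRMK.rieszMeasure Λ), fun f g hg => ?_⟩
  rw [← f.integral_comp_comm hint]
  exact (congrArg (∫ s, · s ∂_) hg).symm.trans
    (RealRMK.integral_rieszMeasure Λ (CompactlySupportedContinuousMap.continuousMapEquiv g))

end WeaklyContinuous

section PositiveUnitBall

variable (E : Type*) [NormedAddCommGroup E] [NormedSpace ℝ E] [Preorder E]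

def positiveUnitBall : Set (WeakDual ℝ E) :=
  WeakDual.toStrongDual ⁻¹' closedBall 0 1 ∩ {φ | ∀ g, 0 ≤ g → 0 ≤ φ g}

theorem isCompact_positiveUnitBall : IsCompact (positiveUnitBall E) := by
  refine (WeakDual.isCompact_closedBall 0 1).inter_right ?_
  simp only [ofPred_forall]
  exact isClosed_iInter fun g => isClosed_iInter fun _ =>
    isClosed_le continuous_const (WeakDual.eval_continuous g)

theorem convex_positiveUnitBall : Convex ℝ (positiveUnitBall E) := by
  refine ((convex_closedBall (0 : StrongDual ℝ E) 1).linear_preimage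
    (WeakDual.toStrongDual : WeakDual ℝ E ≃ₗ[ℝ] StrongDual ℝ E).toLinearMap).inter ?_
  intro φ hφ ψ hψ a b ha hb _ g hg
  exact add_nonneg (mul_nonneg ha (hφ g hg)) (mul_nonneg hb (hψ g hg))

theorem evalCLM_mem_positiveUnitBall {S : Type*} [TopologicalSpace S] [CompactSpace S] (s : S) :
    StrongDual.toWeakDual (ContinuousMap.evalCLM ℝ s) ∈ positiveUnitBall C(S, ℝ) :=
  ⟨mem_closedBall_zero_iff.2 <| ContinuousLinearMap.opNorm_le_bound _ zero_le_one fun g => by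
    simpa using g.norm_coe_le_norm s, fun _ hg => hg s⟩

end PositiveUnitBall

section WeakCompactness

variable {X : Type*} [NormedAddCommGroup X] [NormedSpace ℝ X] [CompleteSpace X]
  {S : Type*} [TopologicalSpace S] [CompactSpace S] [T2Space S] {ι : S → X}

theorem isCompact_toWeakSpace_image_barycenters (hι : Continuous (toWeakSpace ℝ X ∘ ι))
    (hsep : IsSeparable (range ι)) :
    IsCompact (toWeakSpace ℝ X '' {x | ∃ φ ∈ positiveUnitBall C(S, ℝ), IsBarycenter ι φ x}) := by
  choose! G hG using fun φ (hφ : φ ∈ positiveUnitBall C(S, ℝ)) =>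
    exists_isBarycenter hι hsep (WeakDual.toStrongDual φ) hφ.2
  have hcont : ContinuousOn (toWeakSpace ℝ X ∘ G) (positiveUnitBall C(S, ℝ)) := by
    rw [continuousOn_iff_continuous_domRestrict]
    refine WeakBilin.continuous_of_continuous_eval _ fun f => ?_
    let g : C(S, ℝ) := ⟨f ∘ ι, hι.dual_comp_of_toWeakSpace_comp f⟩
    exact ((WeakDual.eval_continuous g).comp continuous_subtype_val).congr
      fun φ => (hG φ φ.2 f g rfl).symm
  convert (isCompact_positiveUnitBall C(S, ℝ)).image_of_continuousOn hcont using 1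
  ext y
  constructor
  · rintro ⟨x, ⟨φ, hφ, hx⟩, rfl⟩
    exact ⟨φ, hφ, by rw [Function.comp_apply, (hG φ hφ).eq hι hx]⟩
  · rintro ⟨φ, hφ, rfl⟩
    exact ⟨G φ, ⟨φ, hφ, hG φ hφ⟩, rfl⟩

theorem isCompact_toWeakSpace_image_closure_convexHull_range
    (hι : Continuous (toWeakSpace ℝ X ∘ ι)) (hsep : IsSeparable (range ι)) :
    IsCompact (toWeakSpace ℝ X '' closure (convexHull ℝ (range ι))) := by
  set B := {x | ∃ φ ∈ positiveUnitBall C(S, ℝ), IsBarycenter ι φ x}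
  have hB : IsCompact (toWeakSpace ℝ X '' B) := isCompact_toWeakSpace_image_barycenters hι hsep
  have hBconv : Convex ℝ B := by
    rintro x ⟨φ, hφ, hx⟩ y ⟨ψ, hψ, hy⟩ a b ha hb hab
    exact ⟨a • φ + b • ψ, convex_positiveUnitBall _ hφ hψ ha hb hab, hx.add_smul hy a b⟩
  have hrange : range ι ⊆ B := range_subset_iff.2 fun s =>
    ⟨_, evalCLM_mem_positiveUnitBall s, isBarycenter_eval ι s⟩
  rw [(convex_convexHull ℝ _).toWeakSpace_closure ℝ]
  exact hB.of_isClosed_subset isClosed_closure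
    (closure_minimal (image_mono (convexHull_min hrange hBconv)) hB.isClosed)

end WeakCompactness

theorem stmt_8 {X : Type*} [NormedAddCommGroup X] [NormedSpace ℝ X] [CompleteSpace X]
    (K : Set X)
    (hsep : TopologicalSpace.IsSeparable K)
    (hK : IsCompact (toWeakSpace ℝ X '' K)) :
    IsCompact (toWeakSpace ℝ X '' closure (convexHull ℝ K)) := by
  have : CompactSpace (toWeakSpace ℝ X '' K) := isCompact_iff_compactSpace.1 hK
  let ι : toWeakSpace ℝ X '' K → X := (toWeakSpace ℝ X).symm ∘ (↑)
  have hrange : range ι = K := by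
    ext x
    simp [ι]
  have hι : Continuous (toWeakSpace ℝ X ∘ ι) := by
    simpa [ι, Function.comp_def] using continuous_subtype_val
  simpa only [hrange] using
    isCompact_toWeakSpace_image_closure_convexHull_range hι (hrange.symm ▸ hsep)
end
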